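/- arXiv:2304.04544 — 3 statements merged into one kernel-verified Lean document; each statement's English description precedes it below -/
import Mathlib

section
/- If f: ℝ^d → ℝ is convex and differentiable with M-Lipschitz continuous gradient, then M⟨x - y, ∇f(x) - ∇f(y)⟩ ≥ ‖∇f(x) - ∇f(y)‖² for all x, y ∈ ℝ^d (cocoercivity of the gradient). -/
open scoped RealInnerProductSpace

/-!
Convexity gives the tangent lower bound `f x + ⟪∇f x, y - x⟫ ≤ f y`, and the Lipschitz bound on
`∇f`, applied along the segment from `x` to `y`, gives the upper bound
`f y ≤ f x + ⟪∇f x, y - x⟫ + M/2 ‖y - x‖²`. Tilting `f` by `-⟪∇f x, ·⟫` makes `x` a global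
minimiser, and one gradient step of length `1/M` from `y` lowers the tilted function by
`‖∇f y - ∇f x‖² / (2M)`; hence `f x + ⟪∇f x, y - x⟫ + ‖∇f y - ∇f x‖² / (2M) ≤ f y`.
Adding this to the same inequality with `x` and `y` exchanged gives cocoercivity.
-/

variable {E : Type*} [NormedAddCommGroup E] [InnerProductSpace ℝ E] {f : E → ℝ} {f' : E → E}

theorem inner_sub_le_of_lipschitz {M : ℝ} (hLip : ∀ x y, ‖f' x - f' y‖ ≤ M * ‖x - y‖)
    (x v : E) {t : ℝ} (ht : 0 ≤ t) :
    ⟪f' (x + t • v) - f' x, v⟫ ≤ M * t * ‖v‖ ^ 2 :=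
  calc ⟪f' (x + t • v) - f' x, v⟫ ≤ ‖f' (x + t • v) - f' x‖ * ‖v‖ := real_inner_le_norm _ _
    _ ≤ M * ‖t • v‖ * ‖v‖ := by
        gcongr
        simpa using hLip (x + t • v) x
    _ = M * t * ‖v‖ ^ 2 := by rw [norm_smul, Real.norm_of_nonneg ht]; ring

theorem ConvexOn.sub_inner_const (hconv : ConvexOn ℝ Set.univ f) (a : E) :
    ConvexOn ℝ Set.univ (fun z => f z - ⟪a, z⟫) :=
  hconv.sub ((innerSL ℝ a).toLinearMap.concaveOn convex_univ)

section Gradient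

variable [CompleteSpace E]

theorem HasGradientAt.hasDerivAt_comp_add_smul {x v g : E} {t : ℝ}
    (hf : HasGradientAt f g (x + t • v)) :
    HasDerivAt (fun s : ℝ => f (x + s • v)) ⟪g, v⟫ t := by
  have hline : HasDerivAt (fun s : ℝ => x + s • v) v t := by
    simpa using ((hasDerivAt_id t).smul_const v).const_add x
  exact hf.hasFDerivAt.comp_hasDerivAt t hline

theorem HasGradientAt.sub_inner_const {x a g : E} (hf : HasGradientAt f g x) :
    HasGradientAt (fun z => f z - ⟪a, z⟫) (g - a) x := by
  rw [hasGradientAt_iff_hasFDerivAt, map_sub]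
  exact hf.hasFDerivAt.sub (innerSL ℝ a).hasFDerivAt

theorem ConvexOn.add_inner_gradient_le (hconv : ConvexOn ℝ Set.univ f) {x g : E}
    (hf : HasGradientAt f g x) (y : E) :
    f x + ⟪g, y - x⟫ ≤ f y := by
  have hline : ConvexOn ℝ Set.univ (fun s : ℝ => f (x + s • (y - x))) := by
    have : (fun s : ℝ => f (x + s • (y - x))) = f ∘ AffineMap.lineMap x y := by
      funext s
      simp [AffineMap.lineMap_apply_module', add_comm]
    rw [this]
    exact hconv.comp_affineMap _
  have hderiv : HasDerivAt (fun s : ℝ => f (x + s • (y - x))) ⟪g, y - x⟫ 0 :=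
    HasGradientAt.hasDerivAt_comp_add_smul (by simpa using hf)
  have := hline.le_slope_of_hasDerivAt (Set.mem_univ 0) (Set.mem_univ 1) one_pos hderiv
  simp only [slope_def_field, one_smul, add_sub_cancel, zero_smul, add_zero, sub_zero, div_one]
    at this
  linarith

theorem le_add_inner_add_sq_of_lipschitz_gradient (hf' : ∀ x, HasGradientAt f (f' x) x)
    {M : ℝ} (hLip : ∀ x y, ‖f' x - f' y‖ ≤ M * ‖x - y‖) (x y : E) :
    f y ≤ f x + ⟪f' x, y - x⟫ + M / 2 * ‖y - x‖ ^ 2 := by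
  set v := y - x
  set h : ℝ → ℝ := fun t => f (x + t • v) - t * ⟪f' x, v⟫ - M / 2 * t ^ 2 * ‖v‖ ^ 2
  have hderiv : ∀ t, HasDerivAt h (⟪f' (x + t • v), v⟫ - ⟪f' x, v⟫ - M * t * ‖v‖ ^ 2) t := by
    intro t
    have hline := (hf' (x + t • v)).hasDerivAt_comp_add_smul
    have hlin : HasDerivAt (fun s : ℝ => s * ⟪f' x, v⟫) ⟪f' x, v⟫ t := by
      simpa using (hasDerivAt_id t).mul_const ⟪f' x, v⟫
    have hquad : HasDerivAt (fun s : ℝ => M / 2 * s ^ 2 * ‖v‖ ^ 2) (M * t * ‖v‖ ^ 2) t :=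
      (((hasDerivAt_pow 2 t).const_mul (M / 2)).mul_const (‖v‖ ^ 2)).congr_deriv
        (by push_cast; ring)
    exact (hline.sub hlin).sub hquad
  have hanti : AntitoneOn h (Set.Ici 0) := by
    refine antitoneOn_of_hasDerivWithinAt_nonpos (convex_Ici 0)
      (HasDerivAt.continuousOn fun t _ => hderiv t) (fun t _ => (hderiv t).hasDerivWithinAt) ?_
    intro t ht
    rw [interior_Ici] at ht
    have := inner_sub_le_of_lipschitz hLip x v (le_of_lt ht)
    rw [inner_sub_left] at this
    linarith
  have := hanti Set.self_mem_Ici (Set.mem_Ici.2 zero_le_one) zero_le_one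
  simp only [h, v, one_smul, add_sub_cancel, one_mul, one_pow, mul_one, zero_smul, add_zero,
    zero_mul, sub_zero, ne_eq, OfNat.ofNat_ne_zero, not_false_eq_true, zero_pow, mul_zero] at this
  linarith

theorem apply_sub_inv_smul_le_of_lipschitz_gradient (hf' : ∀ x, HasGradientAt f (f' x) x)
    {M : ℝ} (hM : M ≠ 0) (hLip : ∀ x y, ‖f' x - f' y‖ ≤ M * ‖x - y‖) (y : E) :
    f (y - M⁻¹ • f' y) ≤ f y - ‖f' y‖ ^ 2 / (2 * M) := by
  have := le_add_inner_add_sq_of_lipschitz_gradient hf' hLip y (y - M⁻¹ • f' y)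
  rw [sub_sub_cancel_left, inner_neg_right, norm_neg, real_inner_smul_right,
    real_inner_self_eq_norm_sq, norm_smul, Real.norm_eq_abs, mul_pow, sq_abs] at this
  convert this using 1
  field_simp
  ring

theorem ConvexOn.add_inner_add_sq_norm_sub_gradient_le (hconv : ConvexOn ℝ Set.univ f)
    (hf' : ∀ x, HasGradientAt f (f' x) x) {M : ℝ} (hM : M ≠ 0)
    (hLip : ∀ x y, ‖f' x - f' y‖ ≤ M * ‖x - y‖) (x y : E) :
    f x + ⟪f' x, y - x⟫ + ‖f' y - f' x‖ ^ 2 / (2 * M) ≤ f y := by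
  set φ : E → ℝ := fun z => f z - ⟪f' x, z⟫
  have hφ : ∀ z, HasGradientAt φ (f' z - f' x) z := fun z => (hf' z).sub_inner_const
  have hmin := (hconv.sub_inner_const (f' x)).add_inner_gradient_le (hφ x)
    (y - M⁻¹ • (f' y - f' x))
  have hstep := apply_sub_inv_smul_le_of_lipschitz_gradient hφ hM (by simpa using hLip) y
  simp only [φ, sub_self, inner_zero_left, add_zero] at hmin hstep
  rw [inner_sub_right]
  linarith

end Gradient

/-- If `f : ℝ^d → ℝ` is convex and differentiable with `M`-Lipschitz continuous
gradient (`M > 0`), then `M ⟪x - y, ∇f x - ∇f y⟫ ≥ ‖∇f x - ∇f y‖²` for all `x, y`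
(cocoercivity of the gradient). -/
theorem stmt5 {d : ℕ} (f : EuclideanSpace ℝ (Fin d) → ℝ)
    (hconv : ConvexOn ℝ Set.univ f)
    (f' : EuclideanSpace ℝ (Fin d) → EuclideanSpace ℝ (Fin d))
    (hf' : ∀ x, HasGradientAt f (f' x) x)
    (M : ℝ) (hM : 0 < M) (hLip : ∀ x y, ‖f' x - f' y‖ ≤ M * ‖x - y‖) :
    ∀ x y, M * ⟪x - y, f' x - f' y⟫ ≥ ‖f' x - f' y‖ ^ 2 := by
  intro x y
  have hxy := hconv.add_inner_add_sq_norm_sub_gradient_le hf' hM.ne' hLip x y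
  have hyx := hconv.add_inner_add_sq_norm_sub_gradient_le hf' hM.ne' hLip y x
  have hsum : ‖f' x - f' y‖ ^ 2 / M ≤ ⟪x - y, f' x - f' y⟫ := by
    rw [norm_sub_rev] at hxy
    have halves : ‖f' x - f' y‖ ^ 2 / (2 * M) + ‖f' x - f' y‖ ^ 2 / (2 * M)
        = ‖f' x - f' y‖ ^ 2 / M := by ring
    simp only [inner_sub_left, inner_sub_right, real_inner_comm x, real_inner_comm y]
      at hxy hyx ⊢
    linarith
  exact (div_le_iff₀' hM).1 hsum
end

section
/- Let U_ρ: ℝ^d → ℝ be m_ρ-strongly convex with minimizer x*, differentiable with (1/ρ)-Lipschitz gradient, where m_ρ > 0 and ρ > 0. Let ν be the density of the Gaussian N(x*, ρI_d) and π_ρ(x) ∝ exp(-U_ρ(x)). Then the chi-square-type integral satisfies ∫_{ℝ^d} ν(x)²/π_ρ(x) dx ≤ (ρ m_ρ)^{-d/2}. -/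
/-!
Both `ν` and `π_ρ` are Gaussian-like around `x*`. Strong convexity gives
`U_ρ ≥ U_ρ(x*) + (m_ρ/2)‖· - x*‖²`, which bounds the normalising constant of `π_ρ` by
`exp(-U_ρ(x*)) (2π/m_ρ)^{d/2}`; the Lipschitz gradient, vanishing at `x*`, gives
`U_ρ ≤ U_ρ(x*) + ‖· - x*‖²/(2ρ)`, which exactly cancels the Gaussian factor of `ν`.
Hence `ν / π_ρ ≤ (ρ m_ρ)^{-d/2}` pointwise, and integrating this against the probability
density `ν` gives the bound.
-/

open MeasureTheory Real Module
open scoped RealInnerProductSpace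

section InnerProductSpace

variable {E : Type*} [NormedAddCommGroup E] [InnerProductSpace ℝ E]

theorem StrongConvexOn.add_sq_norm_sub_le_of_isMinOn {f : E → ℝ} {m : ℝ}
    (hf : StrongConvexOn Set.univ m f) {x₀ : E} (hmin : IsMinOn f Set.univ x₀) (y : E) :
    f x₀ + m / 2 * ‖y - x₀‖ ^ 2 ≤ f y := by
  set g : ℝ → ℝ := fun t => f x₀ + m / 2 * ((1 - t) * ‖y - x₀‖ ^ 2)
  have hg : ∀ t ∈ Set.Ioo (0 : ℝ) 1, g t ≤ f y := by
    rintro t ⟨ht₀, ht₁⟩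
    have hconv := hf.2 (Set.mem_univ x₀) (Set.mem_univ y) (sub_nonneg.2 ht₁.le) ht₀.le
      (sub_add_cancel 1 t)
    have hle := isMinOn_univ_iff.mp hmin ((1 - t) • x₀ + t • y)
    simp only [smul_eq_mul, norm_sub_rev x₀ y] at hconv
    refine le_of_mul_le_mul_left ?_ ht₀
    simp only [g]
    nlinarith
  have hcont : Continuous g := by fun_prop
  simpa [g] using ContinuousWithinAt.closure_le (x := 0) (by simp [closure_Ioo zero_ne_one])
    hcont.continuousWithinAt continuousWithinAt_const hg

theorem IsLocalMin.hasGradientAt_eq_zero [CompleteSpace E] {f : E → ℝ} {f' x : E}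
    (h : IsLocalMin f x) (hf : HasGradientAt f f' x) : f' = 0 :=
  (InnerProductSpace.toDual ℝ E).map_eq_zero_iff.mp (h.hasFDerivAt_eq_zero hf.hasFDerivAt)

theorem le_add_inner_add_sq_norm_of_lipschitz_gradient [CompleteSpace E] {f : E → ℝ}
    {f' : E → E} (hf : ∀ z, HasGradientAt f (f' z) z) {L : ℝ}
    (hL : ∀ a b, ‖f' a - f' b‖ ≤ L * ‖a - b‖) (x y : E) :
    f y ≤ f x + ⟪f' x, y - x⟫ + L / 2 * ‖y - x‖ ^ 2 := by
  set v := y - x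
  set ψ : ℝ → ℝ := fun t => f (x + t • v) - t * ⟪f' x, v⟫ - L / 2 * t ^ 2 * ‖v‖ ^ 2
  have hψ_deriv : ∀ t, HasDerivAt ψ (⟪f' (x + t • v) - f' x, v⟫ - L * t * ‖v‖ ^ 2) t := by
    intro t
    have hline : HasDerivAt (fun s : ℝ => x + s • v) v t := by
      simpa using ((hasDerivAt_id t).smul_const v).const_add x
    have hfline : HasDerivAt (fun s : ℝ => f (x + s • v)) ⟪f' (x + t • v), v⟫ t := by
      simpa [Function.comp_def] using (hf (x + t • v)).hasFDerivAt.comp_hasDerivAt t hline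
    refine ((hfline.sub ((hasDerivAt_id t).mul_const ⟪f' x, v⟫)).sub
      (((hasDerivAt_pow 2 t).const_mul (L / 2)).mul_const (‖v‖ ^ 2))).congr_deriv ?_
    rw [inner_sub_left]
    ring
  have hψ_deriv_nonpos : ∀ t ∈ interior (Set.Icc (0 : ℝ) 1),
      ⟪f' (x + t • v) - f' x, v⟫ - L * t * ‖v‖ ^ 2 ≤ 0 := by
    intro t ht
    rw [interior_Icc] at ht
    refine sub_nonpos.2 ?_
    calc ⟪f' (x + t • v) - f' x, v⟫ ≤ ‖f' (x + t • v) - f' x‖ * ‖v‖ := real_inner_le_norm _ _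
      _ ≤ L * ‖x + t • v - x‖ * ‖v‖ := by gcongr; exact hL _ _
      _ = L * t * ‖v‖ ^ 2 := by
        rw [add_sub_cancel_left, norm_smul, norm_of_nonneg ht.1.le]; ring
  have hanti : AntitoneOn ψ (Set.Icc 0 1) :=
    antitoneOn_of_hasDerivWithinAt_nonpos (convex_Icc 0 1)
      (fun t _ => (hψ_deriv t).continuousAt.continuousWithinAt)
      (fun t _ => (hψ_deriv t).hasDerivWithinAt) hψ_deriv_nonpos
  have hψ_le : ψ 1 ≤ ψ 0 := hanti (by simp) (by simp) zero_le_one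
  simp only [ψ, v, one_smul, add_sub_cancel, zero_smul, add_zero] at hψ_le
  linarith

end InnerProductSpace

section FiniteDimensional

variable {V : Type*} [NormedAddCommGroup V] [InnerProductSpace ℝ V] [FiniteDimensional ℝ V]
  [MeasurableSpace V] [BorelSpace V]

theorem integral_exp_neg_mul_sq_norm_sub {b : ℝ} (hb : 0 < b) (c : V) :
    ∫ x, exp (-b * ‖x - c‖ ^ 2) = (π / b) ^ (finrank ℝ V / 2 : ℝ) := by
  rw [integral_sub_right_eq_self (fun x => exp (-b * ‖x‖ ^ 2)) c,
    GaussianFourier.integral_rexp_neg_mul_sq_norm hb]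

theorem integrable_exp_neg_mul_sq_norm_sub {b : ℝ} (hb : 0 < b) (c : V) :
    Integrable fun x => exp (-b * ‖x - c‖ ^ 2) :=
  .of_integral_ne_zero (by rw [integral_exp_neg_mul_sq_norm_sub hb]; positivity)

theorem integral_gaussian_density_eq_one {ρ : ℝ} (hρ : 0 < ρ) (c : V) :
    ∫ x, (2 * π * ρ) ^ (-(finrank ℝ V : ℝ) / 2) * exp (-‖x - c‖ ^ 2 / (2 * ρ)) = 1 := by
  have hexp : ∀ x : V, exp (-‖x - c‖ ^ 2 / (2 * ρ)) = exp (-(2 * ρ)⁻¹ * ‖x - c‖ ^ 2) :=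
    fun x => congr_arg exp (by ring)
  simp_rw [hexp]
  rw [integral_const_mul, integral_exp_neg_mul_sq_norm_sub (by positivity), div_inv_eq_mul,
    show π * (2 * ρ) = 2 * π * ρ by ring, ← rpow_add (by positivity), neg_div, neg_add_cancel,
    rpow_zero]

theorem integral_exp_neg_le_of_add_sq_norm_sub_le {f : V → ℝ} {m : ℝ} (hm : 0 < m) {x₀ : V}
    (hf : ∀ y, f x₀ + m / 2 * ‖y - x₀‖ ^ 2 ≤ f y) :
    ∫ y, exp (-f y) ≤ exp (-f x₀) * (π / (m / 2)) ^ (finrank ℝ V / 2 : ℝ) := by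
  calc ∫ y, exp (-f y) ≤ ∫ y, exp (-f x₀) * exp (-(m / 2) * ‖y - x₀‖ ^ 2) :=
        integral_mono_of_nonneg (ae_of_all _ fun _ => (exp_pos _).le)
          ((integrable_exp_neg_mul_sq_norm_sub (half_pos hm) x₀).const_mul _)
          (ae_of_all _ fun y => (exp_le_exp.2 (by linarith [hf y])).trans_eq (exp_add _ _))
    _ = exp (-f x₀) * (π / (m / 2)) ^ (finrank ℝ V / 2 : ℝ) := by
        rw [integral_const_mul, integral_exp_neg_mul_sq_norm_sub (half_pos hm)]

theorem gaussian_div_gibbs_density_le {f : V → ℝ} {x₀ : V} {m ρ : ℝ} (hm : 0 < m) (hρ : 0 < ρ)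
    (hlow : ∀ y, f x₀ + m / 2 * ‖y - x₀‖ ^ 2 ≤ f y)
    (hup : ∀ y, f y ≤ f x₀ + ‖y - x₀‖ ^ 2 / (2 * ρ)) (x : V) :
    (2 * π * ρ) ^ (-(finrank ℝ V : ℝ) / 2) * exp (-‖x - x₀‖ ^ 2 / (2 * ρ)) /
        (exp (-f x) / ∫ y, exp (-f y)) ≤ (ρ * m) ^ (-(finrank ℝ V : ℝ) / 2) := by
  set n : ℝ := (finrank ℝ V : ℝ)
  have hconst : (2 * π * ρ) ^ (-n / 2) * (π / (m / 2)) ^ (n / 2) = (ρ * m) ^ (-n / 2) := by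
    rw [neg_div, rpow_neg (by positivity), rpow_neg (by positivity), ← div_eq_inv_mul,
      ← div_rpow (by positivity) (by positivity), ← inv_rpow (by positivity)]
    congr 1
    field_simp
  rw [div_div_eq_mul_div, div_le_iff₀ (exp_pos _)]
  calc (2 * π * ρ) ^ (-n / 2) * exp (-‖x - x₀‖ ^ 2 / (2 * ρ)) * ∫ y, exp (-f y)
      ≤ (2 * π * ρ) ^ (-n / 2) * exp (-‖x - x₀‖ ^ 2 / (2 * ρ)) *
          (exp (-f x₀) * (π / (m / 2)) ^ (n / 2)) := by
        gcongr
        exact integral_exp_neg_le_of_add_sq_norm_sub_le hm hlow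
    _ = (ρ * m) ^ (-n / 2) * exp (-(f x₀ + ‖x - x₀‖ ^ 2 / (2 * ρ))) := by
        rw [← hconst, neg_add, exp_add, neg_div (2 * ρ)]
        ring
    _ ≤ (ρ * m) ^ (-n / 2) * exp (-f x) := by
        gcongr
        exact hup x

end FiniteDimensional

/-- Let `U_ρ : ℝ^d → ℝ` be `m_ρ`-strongly convex (`m_ρ > 0`), differentiable with
`(1/ρ)`-Lipschitz gradient (`ρ > 0`), and minimizer `x*`. Let `ν` be the density of the
Gaussian `N(x*, ρ I_d)` and `π_ρ(x) = exp(-U_ρ x) / ∫ exp(-U_ρ y) dy`. Then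
`∫ ν(x)² / π_ρ(x) dx ≤ (ρ m_ρ)^(-d/2)`. -/
theorem stmt16 {d : ℕ} (Uρ : EuclideanSpace ℝ (Fin d) → ℝ)
    (U' : EuclideanSpace ℝ (Fin d) → EuclideanSpace ℝ (Fin d))
    (hU' : ∀ z, HasGradientAt Uρ (U' z) z)
    (mρ ρ : ℝ) (hm : 0 < mρ) (hρ : 0 < ρ)
    (hsc : StrongConvexOn Set.univ mρ Uρ)
    (hLip : ∀ a b, ‖U' a - U' b‖ ≤ (1 / ρ) * ‖a - b‖)
    (xstar : EuclideanSpace ℝ (Fin d)) (hmin : IsMinOn Uρ Set.univ xstar)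
    -- the Gaussian density ν of N(x*, ρ I_d)
    (ν : EuclideanSpace ℝ (Fin d) → ℝ)
    (hν : ∀ x, ν x = (2 * Real.pi * ρ) ^ (-(d : ℝ) / 2) *
      Real.exp (-‖x - xstar‖ ^ 2 / (2 * ρ)))
    -- the density π_ρ ∝ exp(-U_ρ)
    (πρ : EuclideanSpace ℝ (Fin d) → ℝ)
    (hπ : ∀ x, πρ x = Real.exp (-Uρ x) / ∫ y, Real.exp (-Uρ y)) :
    ∫ x, (ν x) ^ 2 / πρ x ≤ (ρ * mρ) ^ (-(d : ℝ) / 2) := by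
  have hgrad : U' xstar = 0 := (hmin.isLocalMin Filter.univ_mem).hasGradientAt_eq_zero (hU' xstar)
  have hup : ∀ x, Uρ x ≤ Uρ xstar + ‖x - xstar‖ ^ 2 / (2 * ρ) := fun x =>
    (le_add_inner_add_sq_norm_of_lipschitz_gradient hU' hLip xstar x).trans_eq
      (by rw [hgrad, inner_zero_left]; ring)
  have hratio : ∀ x, ν x / πρ x ≤ (ρ * mρ) ^ (-(d : ℝ) / 2) := fun x => by
    simpa only [hν, hπ, finrank_euclideanSpace_fin] using
      gaussian_div_gibbs_density_le hm hρ (hsc.add_sq_norm_sub_le_of_isMinOn hmin) hup x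
  have hν_one : ∫ x, ν x = 1 := by
    simpa only [hν, finrank_euclideanSpace_fin] using integral_gaussian_density_eq_one hρ xstar
  have hν_nonneg : ∀ x, 0 ≤ ν x := fun x => by rw [hν]; positivity
  have hπ_nonneg : ∀ x, 0 ≤ πρ x := fun x => by
    rw [hπ]; exact div_nonneg (exp_pos _).le (integral_nonneg fun _ => (exp_pos _).le)
  calc ∫ x, ν x ^ 2 / πρ x = ∫ x, ν x * (ν x / πρ x) := by simp_rw [sq, mul_div_assoc]
    _ ≤ ∫ x, ν x * (ρ * mρ) ^ (-(d : ℝ) / 2) :=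
        integral_mono_of_nonneg
          (ae_of_all _ fun x => mul_nonneg (hν_nonneg x) (div_nonneg (hν_nonneg x) (hπ_nonneg x)))
          ((Integrable.of_integral_ne_zero (by rw [hν_one]; exact one_ne_zero)).mul_const _)
          (ae_of_all _ fun x => mul_le_mul_of_nonneg_left (hratio x) (hν_nonneg x))
    _ = (ρ * mρ) ^ (-(d : ℝ) / 2) := by rw [integral_mul_const, hν_one, one_mul]
end

section
/- Suppose T₁, T₂ are maps with fixed point (v*, x*), defined by v_{k+1} = prox_{(λ/γ)g*}((λ/γ)Bφ(x_k) + Mv_k) and x_{k+1} = φ(x_k) - γB^T v_{k+1}, where M = I - λBB^T, prox_{(λ/γ)g*} is firmly nonexpansive, 0 < λ ≤ 1/λ_max(BB^T), ρ_min(BB^T) > 0, and ‖φ(x) - φ(y)‖ ≤ η₁‖x - y‖ for some η₁ ∈ [0,1). Then with η = max(η₁², 1 - λρ_min(BB^T)) one has for all k: ‖x_k - x*‖² + (γ²/λ)‖v_k - v*‖² ≤ η^k (‖x₀ - x*‖² + (γ²/λ)‖v₀ - v*‖²). -/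
/-!
Compare one step from two points (here: an iterate and the fixed point). Firm nonexpansiveness
of the proximal map, together with `λ B Bᵀ ≤ I`, gives
`λ‖x' - y'‖² + γ²‖w‖² ≤ λ‖φ x - φ y‖² + γ²(‖z‖² - λ‖Bᵀ z‖²)` for the dual differences `z`, `w`
before and after the step. Contractivity of `φ` and `ρ_min(BBᵀ) ≥ r` bound the right side by
`max(η₁², 1 - λr)` times `λ‖x - y‖² + γ²‖z‖²`, so each step contracts the weighted norm.
-/

open scoped RealInnerProductSpace

namespace PDFP

variable {E F : Type*} [NormedAddCommGroup E] [InnerProductSpace ℝ E] [CompleteSpace E]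
  [NormedAddCommGroup F] [InnerProductSpace ℝ F] [CompleteSpace F] (B : E →L[ℝ] F)

/-- The point `(λ/γ) B a + M v`, `M = I - λ B Bᵀ`, at which the dual update evaluates the
proximal map. -/
noncomputable def proxArg (lam γ : ℝ) (a : E) (v : F) : F :=
  (lam / γ) • B a + (v - lam • B (B.adjoint v))

lemma proxArg_sub (lam γ : ℝ) (a a' : E) (v v' : F) :
    proxArg B lam γ a v - proxArg B lam γ a' v' = proxArg B lam γ (a - a') (v - v') := by
  simp only [proxArg, map_sub, smul_sub]
  abel

lemma inner_proxArg (lam γ : ℝ) (a : E) (v w : F) :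
    ⟪w, proxArg B lam γ a v⟫ =
      lam / γ * ⟪B.adjoint w, a⟫ + ⟪w, v⟫ - lam * ⟪B.adjoint w, B.adjoint v⟫ := by
  rw [proxArg, inner_add_right, inner_sub_right, real_inner_smul_right, real_inner_smul_right,
    ← ContinuousLinearMap.adjoint_inner_left, ← ContinuousLinearMap.adjoint_inner_left]
  ring

lemma inner_apply_adjoint_self (v : F) : ⟪B (B.adjoint v), v⟫ = ‖B.adjoint v‖ ^ 2 := by
  rw [real_inner_comm, ← ContinuousLinearMap.adjoint_inner_left, real_inner_self_eq_norm_sq]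

/-- Twice the firm nonexpansiveness cancels the cross term `⟪Bᵀ w, a⟫` of the primal update;
what remains is the quadratic form of `λ B Bᵀ - I` at `w - z`. -/
lemma energy_step_le {lam γ : ℝ} {a : E} {w z : F}
    (hM : lam * ‖B.adjoint (w - z)‖ ^ 2 ≤ ‖w - z‖ ^ 2)
    (hfirm : ‖w‖ ^ 2 ≤ ⟪w, proxArg B lam γ a z⟫) :
    lam * ‖a - γ • B.adjoint w‖ ^ 2 + γ ^ 2 * ‖w‖ ^ 2 ≤
      lam * ‖a‖ ^ 2 + γ ^ 2 * (‖z‖ ^ 2 - lam * ‖B.adjoint z‖ ^ 2) := by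
  -- also for `γ = 0`, where `lam / γ = 0`
  have hγ : γ ^ 2 * (lam / γ) = lam * γ := by
    rcases eq_or_ne γ 0 with rfl | hγ
    · simp
    · field_simp
  rw [inner_proxArg] at hfirm
  rw [map_sub, norm_sub_sq_real, norm_sub_sq_real] at hM
  rw [norm_sub_sq_real, norm_smul, real_inner_smul_right, Real.norm_eq_abs, mul_pow, sq_abs,
    real_inner_comm]
  linear_combination 2 * γ ^ 2 * hfirm + γ ^ 2 * hM + 2 * ⟪B.adjoint w, a⟫ * hγ

lemma step_contraction {lam γ r η : ℝ} (hlam : 0 < lam)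
    (hρmin : ∀ v : F, r * ‖v‖ ^ 2 ≤ ⟪B (B.adjoint v), v⟫)
    (hlammax : ∀ v : F, lam * ⟪B (B.adjoint v), v⟫ ≤ ‖v‖ ^ 2)
    {P : F → F} (hP : ∀ u w, ‖P u - P w‖ ^ 2 ≤ ⟪P u - P w, u - w⟫)
    {φ : E → E} (hφ : ∀ x y, ‖φ x - φ y‖ ≤ η * ‖x - y‖)
    {x y x' y' : E} {v w v' w' : F}
    (hv' : v' = P (proxArg B lam γ (φ x) v)) (hw' : w' = P (proxArg B lam γ (φ y) w))
    (hx' : x' = φ x - γ • B.adjoint v') (hy' : y' = φ y - γ • B.adjoint w') :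
    ‖x' - y'‖ ^ 2 + γ ^ 2 / lam * ‖v' - w'‖ ^ 2 ≤
      max (η ^ 2) (1 - lam * r) * (‖x - y‖ ^ 2 + γ ^ 2 / lam * ‖v - w‖ ^ 2) := by
  have hfirm : ‖v' - w'‖ ^ 2 ≤ ⟪v' - w', proxArg B lam γ (φ x - φ y) (v - w)⟫ := by
    rw [← proxArg_sub, hv', hw']
    exact hP _ _
  have hx'y' : x' - y' = (φ x - φ y) - γ • B.adjoint (v' - w') := by
    rw [hx', hy', map_sub, smul_sub]
    abel
  have henergy := energy_step_le B
    (by simpa only [inner_apply_adjoint_self] using hlammax (v' - w' - (v - w))) hfirm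
  rw [← hx'y'] at henergy
  have hρ : r * ‖v - w‖ ^ 2 ≤ ‖B.adjoint (v - w)‖ ^ 2 := by
    simpa only [inner_apply_adjoint_self] using hρmin (v - w)
  have hφ2 : ‖φ x - φ y‖ ^ 2 ≤ η ^ 2 * ‖x - y‖ ^ 2 := by
    rw [← mul_pow]
    exact pow_le_pow_left₀ (norm_nonneg _) (hφ x y) 2
  have hmax_left := mul_le_mul_of_nonneg_right (le_max_left (η ^ 2) (1 - lam * r))
    (sq_nonneg ‖x - y‖)
  have hmax_right := mul_le_mul_of_nonneg_right (le_max_right (η ^ 2) (1 - lam * r))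
    (sq_nonneg ‖v - w‖)
  rw [← mul_le_mul_iff_of_pos_left hlam]
  field_simp
  linear_combination henergy + lam * hφ2 + lam * hmax_left + γ ^ 2 * lam * hρ +
    γ ^ 2 * hmax_right

end PDFP

theorem stmt19_general {d p : ℕ}
    (B : EuclideanSpace ℝ (Fin d) →L[ℝ] EuclideanSpace ℝ (Fin p))
    (lam γ r η₁ : ℝ) (hlam : 0 < lam)
    -- ρ_min(BBᵀ) ≥ r > 0
    (hρmin : ∀ v : EuclideanSpace ℝ (Fin p), r * ‖v‖ ^ 2 ≤ ⟪B (B.adjoint v), v⟫)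
    -- λ ≤ 1/λ_max(BBᵀ)
    (hlammax : ∀ v : EuclideanSpace ℝ (Fin p), lam * ⟪B (B.adjoint v), v⟫ ≤ ‖v‖ ^ 2)
    -- P = prox_{(λ/γ) g*} is firmly nonexpansive
    (P : EuclideanSpace ℝ (Fin p) → EuclideanSpace ℝ (Fin p))
    (hP : ∀ u w, ‖P u - P w‖ ^ 2 ≤ ⟪P u - P w, u - w⟫)
    -- φ is η₁-contractive
    (φ : EuclideanSpace ℝ (Fin d) → EuclideanSpace ℝ (Fin d))
    (hφ : ∀ x y, ‖φ x - φ y‖ ≤ η₁ * ‖x - y‖)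
    -- the iterates
    (x : ℕ → EuclideanSpace ℝ (Fin d)) (v : ℕ → EuclideanSpace ℝ (Fin p))
    (hv : ∀ k, v (k + 1) =
      P ((lam / γ) • B (φ (x k)) + (v k - lam • B (B.adjoint (v k)))))
    (hx : ∀ k, x (k + 1) = φ (x k) - γ • B.adjoint (v (k + 1)))
    -- the fixed point (v*, x*)
    (xs : EuclideanSpace ℝ (Fin d)) (vs : EuclideanSpace ℝ (Fin p))
    (hvs : vs = P ((lam / γ) • B (φ xs) + (vs - lam • B (B.adjoint vs))))
    (hxs : xs = φ xs - γ • B.adjoint vs) :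
    ∀ k, ‖x k - xs‖ ^ 2 + (γ ^ 2 / lam) * ‖v k - vs‖ ^ 2 ≤
      (max (η₁ ^ 2) (1 - lam * r)) ^ k *
        (‖x 0 - xs‖ ^ 2 + (γ ^ 2 / lam) * ‖v 0 - vs‖ ^ 2) := fun k =>
  le_geom (u := fun k => ‖x k - xs‖ ^ 2 + (γ ^ 2 / lam) * ‖v k - vs‖ ^ 2)
    ((sq_nonneg η₁).trans (le_max_left _ _)) k fun n _ =>
      PDFP.step_contraction B hlam hρmin hlammax hP hφ (hv n) hvs (hx n) hxs

/-- Linear convergence of the PDFP iteration. Let `B : ℝ^d → ℝ^p` be linear with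
`0 < λ ≤ 1/λ_max(BBᵀ)` and `ρ_min(BBᵀ) = r > 0` (expressed through the quadratic-form
bounds `r‖v‖² ≤ ⟪BBᵀv, v⟫` and `λ⟪BBᵀv, v⟫ ≤ ‖v‖²`), let `P = prox_{(λ/γ)g*}` be firmly
nonexpansive, and let `φ` be `η₁`-contractive with `η₁ ∈ [0,1)`. Suppose
`v_{k+1} = P((λ/γ)Bφ(x_k) + Mv_k)` and `x_{k+1} = φ(x_k) - γBᵀv_{k+1}` with
`M = I - λBBᵀ`, and `(v*, x*)` is the corresponding fixed point. Then with
`η = max(η₁², 1 - λr)`, for all `k`: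
`‖x_k - x*‖² + (γ²/λ)‖v_k - v*‖² ≤ η^k (‖x_0 - x*‖² + (γ²/λ)‖v_0 - v*‖²)`. -/
theorem stmt19 {d p : ℕ}
    (B : EuclideanSpace ℝ (Fin d) →L[ℝ] EuclideanSpace ℝ (Fin p))
    (lam γ r η₁ : ℝ) (hlam : 0 < lam) (hγ : 0 < γ) (hr : 0 < r)
    (hη₁0 : 0 ≤ η₁) (hη₁1 : η₁ < 1)
    -- ρ_min(BBᵀ) ≥ r > 0
    (hρmin : ∀ v : EuclideanSpace ℝ (Fin p), r * ‖v‖ ^ 2 ≤ ⟪B (B.adjoint v), v⟫)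
    -- λ ≤ 1/λ_max(BBᵀ)
    (hlammax : ∀ v : EuclideanSpace ℝ (Fin p), lam * ⟪B (B.adjoint v), v⟫ ≤ ‖v‖ ^ 2)
    -- P = prox_{(λ/γ) g*} is firmly nonexpansive
    (P : EuclideanSpace ℝ (Fin p) → EuclideanSpace ℝ (Fin p))
    (hP : ∀ u w, ‖P u - P w‖ ^ 2 ≤ ⟪P u - P w, u - w⟫)
    -- φ is η₁-contractive
    (φ : EuclideanSpace ℝ (Fin d) → EuclideanSpace ℝ (Fin d))
    (hφ : ∀ x y, ‖φ x - φ y‖ ≤ η₁ * ‖x - y‖)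
    -- the iterates
    (x : ℕ → EuclideanSpace ℝ (Fin d)) (v : ℕ → EuclideanSpace ℝ (Fin p))
    (hv : ∀ k, v (k + 1) =
      P ((lam / γ) • B (φ (x k)) + (v k - lam • B (B.adjoint (v k)))))
    (hx : ∀ k, x (k + 1) = φ (x k) - γ • B.adjoint (v (k + 1)))
    -- the fixed point (v*, x*)
    (xs : EuclideanSpace ℝ (Fin d)) (vs : EuclideanSpace ℝ (Fin p))
    (hvs : vs = P ((lam / γ) • B (φ xs) + (vs - lam • B (B.adjoint vs))))
    (hxs : xs = φ xs - γ • B.adjoint vs) :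
    ∀ k, ‖x k - xs‖ ^ 2 + (γ ^ 2 / lam) * ‖v k - vs‖ ^ 2 ≤
      (max (η₁ ^ 2) (1 - lam * r)) ^ k *
        (‖x 0 - xs‖ ^ 2 + (γ ^ 2 / lam) * ‖v 0 - vs‖ ^ 2) :=
  stmt19_general B lam γ r η₁ hlam hρmin hlammax P hP φ hφ x v hv hx xs vs hvs hxs
end
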